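/- Let G be a groupoid and let B be a family of endomorphisms (closed morphisms) of G. Suppose every endomorphism f : u → u of G can be written as a composite (g₁ ≫ b₁^{ε₁} ≫ g₁⁻¹) ≫ ⋯ ≫ (g_k ≫ b_k^{εₖ} ≫ g_k⁻¹) where each bᵢ is in B, εᵢ ∈ {1,-1}, and gᵢ : u → uᵢ are morphisms of G with bᵢ : uᵢ → uᵢ. Then for any two parallel morphisms f, g : u → v of G, f and g become equal in the quotient of G by the relations b = identity for all b ∈ B. -/

import Mathlib

open CategoryTheory

/-- The endomorphisms of `u` that are composites of conjugates
`g ≫ b^ε ≫ g⁻¹` with `b` in the family `B`. -/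
inductive ConjProd {G : Type*} [Groupoid G] (B : ∀ u : G, Set (u ⟶ u)) :
    ∀ u : G, (u ⟶ u) → Prop
  | id (u : G) : ConjProd B u (𝟙 u)
  | cons {u w : G} (g : u ⟶ w) (b : w ⟶ w)
      (hb : b ∈ B w ∨ Groupoid.inv b ∈ B w) {f : u ⟶ u}
      (hf : ConjProd B u f) :
      ConjProd B u ((g ≫ b ≫ Groupoid.inv g) ≫ f)

section aux

variable {G : Type*} [Groupoid G] (B : ∀ u : G, Set (u ⟶ u))

/-- The relation identifying each `b ∈ B` with the identity. -/
def quotRel : HomRel G :=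
  fun {a b} (p q : a ⟶ b) => ∃ e : b = a, (e ▸ p) ∈ B a ∧ q = eqToHom e.symm

lemma map_mem_eq_id {w : G} {b : w ⟶ w} (hb : b ∈ B w) :
    (Quotient.functor (quotRel B)).map b = 𝟙 _ := by
  have := CategoryTheory.Quotient.sound (quotRel B) (f₁ := b) (f₂ := 𝟙 w) ⟨rfl, hb, rfl⟩
  simpa using this

lemma map_eq_id {w : G} {b : w ⟶ w} (hb : b ∈ B w ∨ Groupoid.inv b ∈ B w) :
    (Quotient.functor (quotRel B)).map b = 𝟙 _ := by
  rcases hb with hb | hb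
  · exact map_mem_eq_id B hb
  · have h1 := map_mem_eq_id B hb
    calc (Quotient.functor (quotRel B)).map b
        = (Quotient.functor (quotRel B)).map (Groupoid.inv b) ≫
            (Quotient.functor (quotRel B)).map b := by rw [h1, Category.id_comp]
      _ = (Quotient.functor (quotRel B)).map (Groupoid.inv b ≫ b) := by
            rw [(Quotient.functor (quotRel B)).map_comp]
      _ = 𝟙 _ := by rw [Groupoid.inv_comp, (Quotient.functor (quotRel B)).map_id]

lemma map_conjprod_eq_id {u : G} {f : u ⟶ u} (hf : ConjProd B u f) :
    (Quotient.functor (quotRel B)).map f = 𝟙 _ := by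
  induction hf with
  | id => exact (Quotient.functor (quotRel B)).map_id _
  | cons g b hb hf ih =>
      rw [(Quotient.functor (quotRel B)).map_comp, ih, Category.comp_id,
        (Quotient.functor (quotRel B)).map_comp,
        (Quotient.functor (quotRel B)).map_comp, map_eq_id B hb,
        Category.id_comp, ← (Quotient.functor (quotRel B)).map_comp,
        Groupoid.comp_inv, (Quotient.functor (quotRel B)).map_id]

end aux

/-- If every endomorphism of `G` is a composite of conjugates of elements of
`B` and their inverses, then any two parallel morphisms of `G` become equal in
the quotient of `G` by the relations `b = identity`, `b ∈ B`. -/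
theorem parallel_eq_in_quotient {G : Type*} [Groupoid G]
    (B : ∀ u : G, Set (u ⟶ u))
    (hgen : ∀ (u : G) (f : u ⟶ u), ConjProd B u f)
    {u v : G} (f g : u ⟶ v) :
    (Quotient.functor (show HomRel G from fun {a b} (p q : a ⟶ b) =>
        ∃ e : b = a, (e ▸ p) ∈ B a ∧ q = eqToHom e.symm)).map f =
    (Quotient.functor _).map g := by
  show (Quotient.functor (quotRel B)).map f = (Quotient.functor (quotRel B)).map g
  set F := Quotient.functor (quotRel B) with hF
  have h1 : F.map (f ≫ Groupoid.inv g) = 𝟙 _ :=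
    map_conjprod_eq_id B (hgen u _)
  have h2 : F.map (g ≫ Groupoid.inv g) = 𝟙 _ := by
    rw [Groupoid.comp_inv, F.map_id]
  rw [F.map_comp] at h1 h2
  have : IsIso (F.map (Groupoid.inv g)) := inferInstance
  rw [← cancel_mono (F.map (Groupoid.inv g)), h1, h2]
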